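/- Let M ≥ 1 and let q₀^{(j)}, q₁^{(j)} (0 ≤ j ≤ M−1) and e₀ be positive real numbers. Define e^{(0)} = e₀ and, for j = 1, 2, …, M: e^{(j)} = e^{(j−1)} q₀^{(M−j)} / (e^{(j−1)} + q₁^{(M−j)}), q̃₀^{(M−j)} = q₁^{(M−j)} q₀^{(M−j)} / (e^{(j−1)} + q₁^{(M−j)}), and q̃₁^{(M−j)} = e^{(j−1)} + q₁^{(M−j)}. Define α_{−1} = 1, α₀ = e₀ + q₁^{(M−1)}, and α_i = α_{i−1} q₁^{(M−i−1)} + e₀ ∏_{j=0}^{i−1} q₀^{(M−j−1)} for 1 ≤ i ≤ M−1. Then for all 0 ≤ i ≤ M−1: q̃₀^{(i)} = q₁^{(i)} q₀^{(i)} α_{M−2−i} / α_{M−1−i} and q̃₁^{(i)} = α_{M−1−i} / α_{M−2−i}; moreover e^{(j)} = e₀ (∏_{l=1}^{j} q₀^{(M−l)}) / α_{j−1} for 1 ≤ j ≤ M. -/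

import Mathlib

/-- `alphaS M q0 q1 e0 (i+1) = α_i` of the paper, with the convention `alphaS M q0 q1 e0 0 = α_{-1} = 1`:
`α_0 = e0 + q1^{(M-1)}`, `α_i = α_{i-1} q1^{(M-i-1)} + e0 ∏_{j<i} q0^{(M-j-1)}`. -/
noncomputable def alphaS (M : ℕ) (q0 q1 : ℕ → ℝ) (e0 : ℝ) : ℕ → ℝ
  | 0 => 1
  | 1 => e0 + q1 (M - 1)
  | i + 2 => alphaS M q0 q1 e0 (i + 1) * q1 (M - i - 2) +
      e0 * ∏ j ∈ Finset.range (i + 1), q0 (M - j - 1)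

/-- `eIter M q0 q1 e0 j = e^{(j)}`: `e^{(0)} = e0`,
`e^{(j)} = e^{(j-1)} q0^{(M-j)} / (e^{(j-1)} + q1^{(M-j)})`. -/
noncomputable def eIter (M : ℕ) (q0 q1 : ℕ → ℝ) (e0 : ℝ) : ℕ → ℝ
  | 0 => e0
  | j + 1 =>
      eIter M q0 q1 e0 j * q0 (M - j - 1) / (eIter M q0 q1 e0 j + q1 (M - j - 1))

lemma alphaS_succ (M : ℕ) (q0 q1 : ℕ → ℝ) (e0 : ℝ) (j : ℕ) :
    alphaS M q0 q1 e0 (j + 1)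
      = alphaS M q0 q1 e0 j * q1 (M - j - 1) + e0 * ∏ l ∈ Finset.range j, q0 (M - l - 1) := by
  cases j with
  | zero => simp [alphaS]; ring
  | succ i => rfl

lemma alphaS_pos (M : ℕ) (q0 q1 : ℕ → ℝ) (e0 : ℝ)
    (hq0 : ∀ j < M, 0 < q0 j) (hq1 : ∀ j < M, 0 < q1 j) (he0 : 0 < e0) :
    ∀ j ≤ M, 0 < alphaS M q0 q1 e0 j := by
  intro j
  induction j with
  | zero => intro _; norm_num [alphaS]
  | succ i ih =>
    intro h
    rw [alphaS_succ]
    have h1 : 0 < q1 (M - i - 1) := hq1 _ (by omega)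
    have h2 : 0 < ∏ l ∈ Finset.range i, q0 (M - l - 1) :=
      Finset.prod_pos fun l hl => hq0 _ (by omega)
    have h3 := ih (by omega)
    positivity

lemma eIter_eq (M : ℕ) (q0 q1 : ℕ → ℝ) (e0 : ℝ)
    (hq0 : ∀ j < M, 0 < q0 j) (hq1 : ∀ j < M, 0 < q1 j) (he0 : 0 < e0) :
    ∀ j ≤ M,
      eIter M q0 q1 e0 j
        = e0 * (∏ l ∈ Finset.range j, q0 (M - l - 1)) / alphaS M q0 q1 e0 j := by
  intro j
  induction j with
  | zero => intro _; simp [eIter, alphaS]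
  | succ i ih =>
    intro h
    have hi := ih (by omega)
    have hai : (0:ℝ) < alphaS M q0 q1 e0 i := alphaS_pos M q0 q1 e0 hq0 hq1 he0 i (by omega)
    have hai1 : (0:ℝ) < alphaS M q0 q1 e0 (i + 1) := alphaS_pos M q0 q1 e0 hq0 hq1 he0 (i + 1) h
    have hsum : eIter M q0 q1 e0 i + q1 (M - i - 1)
        = alphaS M q0 q1 e0 (i + 1) / alphaS M q0 q1 e0 i := by
      rw [hi, alphaS_succ]
      field_simp
      ring
    show eIter M q0 q1 e0 i * q0 (M - i - 1) / (eIter M q0 q1 e0 i + q1 (M - i - 1)) = _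
    rw [hsum, hi, Finset.prod_range_succ]
    field_simp

lemma eIter_sum (M : ℕ) (q0 q1 : ℕ → ℝ) (e0 : ℝ)
    (hq0 : ∀ j < M, 0 < q0 j) (hq1 : ∀ j < M, 0 < q1 j) (he0 : 0 < e0) :
    ∀ j < M, eIter M q0 q1 e0 j + q1 (M - j - 1)
      = alphaS M q0 q1 e0 (j + 1) / alphaS M q0 q1 e0 j := by
  intro j hj
  have hai : (0:ℝ) < alphaS M q0 q1 e0 j := alphaS_pos M q0 q1 e0 hq0 hq1 he0 j (by omega)
  rw [eIter_eq M q0 q1 e0 hq0 hq1 he0 j (by omega), alphaS_succ]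
  field_simp
  ring

/-- closed formulas for the M-fold composition of the elementary birational
Toda transformation: `q̃0^{(i)} = q1^{(i)} q0^{(i)} α_{M-2-i}/α_{M-1-i}`,
`q̃1^{(i)} = α_{M-1-i}/α_{M-2-i}`, and `e^{(j)} = e0 (∏_{l=1}^j q0^{(M-l)})/α_{j-1}`. -/
theorem stmt_10 (M : ℕ) (hM : 1 ≤ M) (q0 q1 : ℕ → ℝ) (e0 : ℝ)
    (hq0 : ∀ j < M, 0 < q0 j) (hq1 : ∀ j < M, 0 < q1 j) (he0 : 0 < e0) :
    (∀ i < M,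
      q1 i * q0 i / (eIter M q0 q1 e0 (M - i - 1) + q1 i)
          = q1 i * q0 i * alphaS M q0 q1 e0 (M - 1 - i) / alphaS M q0 q1 e0 (M - i) ∧
      eIter M q0 q1 e0 (M - i - 1) + q1 i
          = alphaS M q0 q1 e0 (M - i) / alphaS M q0 q1 e0 (M - 1 - i)) ∧
    (∀ j, 1 ≤ j → j ≤ M →
      eIter M q0 q1 e0 j
          = e0 * (∏ l ∈ Finset.range j, q0 (M - l - 1)) / alphaS M q0 q1 e0 j) := by
  constructor
  · intro i hi
    have h1 := eIter_sum M q0 q1 e0 hq0 hq1 he0 (M - i - 1) (by omega)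
    have e1 : M - (M - i - 1) - 1 = i := by omega
    have e2 : M - i - 1 + 1 = M - i := by omega
    have e3 : M - i - 1 = M - 1 - i := by omega
    rw [e1, e2] at h1
    rw [e3] at h1 ⊢
    refine ⟨?_, h1⟩
    rw [h1]
    have ha : (0:ℝ) < alphaS M q0 q1 e0 (M - i) :=
      alphaS_pos M q0 q1 e0 hq0 hq1 he0 _ (by omega)
    have hb : (0:ℝ) < alphaS M q0 q1 e0 (M - 1 - i) :=
      alphaS_pos M q0 q1 e0 hq0 hq1 he0 _ (by omega)
    field_simp
  · intro j h1 h2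
    exact eIter_eq M q0 q1 e0 hq0 hq1 he0 j h2
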